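/- arXiv:1307.2415 — 4 statements merged into one kernel-verified Lean document; each statement's English description precedes it below -/
import Mathlib

section
/- Let F be a field of characteristic 2 and let G = (ZMod 2)^k be the group of k-dimensional binary vectors under entry-wise addition modulo 2, with group algebra F[G] and canonical embedding `of : G → F[G]`. Let v : Fin n → G be any assignment of a vector to each of n indices, and let I : Fin k → Fin n be a walk (sequence of indices). If I is not injective (some index is visited twice), then the product ∏_{c=0}^{k-1} (1 + of (v (I c))) equals 0 in F[G]. -/
lemma aux_sq {k : ℕ} (F : Type*) [Field F] [CharP F 2]
    (g : Multiplicative (Fin k → ZMod 2)) :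
    (1 + MonoidAlgebra.of F (Multiplicative (Fin k → ZMod 2)) g) *
      (1 + MonoidAlgebra.of F (Multiplicative (Fin k → ZMod 2)) g) = 0 := by
  have hg : g * g = 1 := by
    have : Multiplicative.toAdd g + Multiplicative.toAdd g = 0 := by
      funext i; exact CharTwo.add_self_eq_zero _
    exact Multiplicative.toAdd.injective this
  have h2 : (2 : MonoidAlgebra F (Multiplicative (Fin k → ZMod 2))) = 0 := by
    have : (2 : MonoidAlgebra F (Multiplicative (Fin k → ZMod 2)))
        = algebraMap F _ 2 := by
      rw [map_ofNat]
    rw [this, show (2:F) = 0 from CharTwo.two_eq_zero, map_zero]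
  have : (1 + MonoidAlgebra.of F (Multiplicative (Fin k → ZMod 2)) g) *
      (1 + MonoidAlgebra.of F (Multiplicative (Fin k → ZMod 2)) g)
      = 2 + 2 * MonoidAlgebra.of F (Multiplicative (Fin k → ZMod 2)) g := by
    have : (MonoidAlgebra.of F (Multiplicative (Fin k → ZMod 2)) g) *
        (MonoidAlgebra.of F (Multiplicative (Fin k → ZMod 2)) g) = 1 := by
      rw [← map_mul, hg, map_one]
    ring_nf
    rw [← pow_two] at this
    rw [this]; ring
  rw [this, h2]; ring

/-- Proposition 1: in the group algebra `F[(ZMod 2)^k]` over a field `F` of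
characteristic 2, the product `∏ c, (1 + of (v (I c)))` corresponding to a
non-simple walk `I` (i.e. `I` not injective) vanishes. -/
theorem stmt_1 {n k : ℕ} (F : Type*) [Field F] [CharP F 2]
    (v : Fin n → Multiplicative (Fin k → ZMod 2)) (I : Fin k → Fin n)
    (hI : ¬ Function.Injective I) :
    ∏ c : Fin k,
      (1 + MonoidAlgebra.of F (Multiplicative (Fin k → ZMod 2)) (v (I c))) = 0 := by
  simp only [Function.Injective, not_forall] at hI
  obtain ⟨i, j, hij, hne⟩ := hI
  set f := fun c : Fin k =>
    (1 + MonoidAlgebra.of F (Multiplicative (Fin k → ZMod 2)) (v (I c))) with hf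
  have hj : j ∈ Finset.univ.erase i := Finset.mem_erase.mpr ⟨fun h => hne h.symm, Finset.mem_univ j⟩
  calc ∏ c, f c = f i * ∏ c ∈ Finset.univ.erase i, f c :=
        (Finset.mul_prod_erase Finset.univ f (Finset.mem_univ i)).symm
    _ = f i * (f j * ∏ c ∈ (Finset.univ.erase i).erase j, f c) := by
        rw [Finset.mul_prod_erase _ f hj]
    _ = 0 := by
        rw [← mul_assoc, hf]
        simp only [hij]
        rw [aux_sq, zero_mul]
end

section
/- Let F be a field and let G = (ZMod 2)^k be the group of k-dimensional binary vectors under entry-wise addition modulo 2, with group algebra F[G] and canonical embedding `of : G → F[G]`. If v : Fin k → G is a family of k vectors that is linearly independent over ZMod 2, then ∏_{c=0}^{k-1} (1 + of (v c)) = ∑_{g ∈ G} of g, i.e. the product equals the sum J of all 2^k group elements, each with coefficient 1. -/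
/-- Proposition 2: in the group algebra `F[(ZMod 2)^k]`, if the vectors
`v 0, …, v (k-1)` are linearly independent over `ZMod 2`, then the product
`∏ c, (1 + of (v c))` equals the sum `J` of all `2^k` group elements. -/
theorem stmt_2 {k : ℕ} (F : Type*) [Field F]
    (v : Fin k → (Fin k → ZMod 2)) (hv : LinearIndependent (ZMod 2) v) :
    ∏ c : Fin k,
        (1 + MonoidAlgebra.of F (Multiplicative (Fin k → ZMod 2))
          (Multiplicative.ofAdd (v c)))
      = ∑ g : Multiplicative (Fin k → ZMod 2),
          MonoidAlgebra.of F (Multiplicative (Fin k → ZMod 2)) g := by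
  classical
  have hφ : Function.Bijective (fun t : Finset (Fin k) =>
      Multiplicative.ofAdd (∑ c ∈ t, v c)) := by
    rw [Fintype.bijective_iff_injective_and_card]
    constructor
    · intro s t hst
      have hst' : ∑ c ∈ s, v c = ∑ c ∈ t, v c := by
        exact Multiplicative.ofAdd.injective hst
      have h0 : ∑ i, ((if i ∈ s then (1 : ZMod 2) else 0)
          - (if i ∈ t then (1 : ZMod 2) else 0)) • v i = 0 := by
        simp only [sub_smul, Finset.sum_sub_distrib, ite_smul, one_smul, zero_smul]
        rw [Finset.sum_ite_mem, Finset.sum_ite_mem]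
        simp [Finset.univ_inter, hst']
      have hall := Fintype.linearIndependent_iff.mp hv _ h0
      ext i
      have hi := hall i
      by_cases h1 : i ∈ s <;> by_cases h2 : i ∈ t <;>
        simp [h1, h2] at hi ⊢
    · simp [Fintype.card_finset, Fintype.card_fun]
  have hcomm : ∀ c : Fin k,
      (1 + MonoidAlgebra.of F (Multiplicative (Fin k → ZMod 2))
        (Multiplicative.ofAdd (v c)))
      = MonoidAlgebra.of F (Multiplicative (Fin k → ZMod 2))
        (Multiplicative.ofAdd (v c)) + 1 := fun c => add_comm _ _
  simp_rw [hcomm]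
  rw [Finset.prod_add]
  simp only [Finset.prod_const_one, mul_one, Finset.powerset_univ]
  exact Fintype.sum_bijective _ hφ _ _ (fun t => by
    rw [ofAdd_sum, map_prod])
end

section
/- Let F be a field of characteristic 2 and let G = (ZMod 2)^k be the group of k-dimensional binary vectors under entry-wise addition modulo 2, with group algebra F[G] and canonical embedding `of : G → F[G]`. If v : Fin k → G is a family of k vectors that is NOT linearly independent over ZMod 2 (i.e. linearly dependent), then ∏_{c=0}^{k-1} (1 + of (v c)) = 0 in F[G]. -/
/-- Auxiliary lemma: in a commutative ring where `1 + 1 = 0`, for any family of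
square-one elements, `(∏ i ∈ S, (1 + g i)) * (1 + ∏ i ∈ S, g i) = 0`. -/
lemma aux_prod {R : Type*} [CommRing R] (h2 : (1:R) + 1 = 0) {ι : Type*} [DecidableEq ι]
    (g : ι → R) (hg : ∀ i, g i * g i = 1) (S : Finset ι) :
    (∏ i ∈ S, (1 + g i)) * (1 + ∏ i ∈ S, g i) = 0 := by
  induction S using Finset.induction_on with
  | empty => simpa using h2
  | insert a T ha IH =>
    rw [Finset.prod_insert ha, Finset.prod_insert ha]
    linear_combination (1 + g a) * IH + (∏ i ∈ T, (1 + g i)) * (∏ i ∈ T, g i) * (hg a)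

/-- Proposition 4: in the group algebra `F[(ZMod 2)^k]` over a field `F` of
characteristic 2, if the vectors `v 0, …, v (k-1)` are linearly dependent over
`ZMod 2`, then the product `∏ c, (1 + of (v c))` vanishes. -/
theorem stmt_3 {k : ℕ} (F : Type*) [Field F] [CharP F 2]
    (v : Fin k → (Fin k → ZMod 2)) (hv : ¬ LinearIndependent (ZMod 2) v) :
    ∏ c : Fin k,
        (1 + MonoidAlgebra.of F (Multiplicative (Fin k → ZMod 2))
          (Multiplicative.ofAdd (v c))) = 0 := by
  set G := Multiplicative (Fin k → ZMod 2)
  set g : Fin k → MonoidAlgebra F G :=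
    fun i => MonoidAlgebra.of F G (Multiplicative.ofAdd (v i)) with hgdef
  have h2 : (1 : MonoidAlgebra F G) + 1 = 0 := by
    have : ((1 : F) + 1) = 0 := by
      rw [one_add_one_eq_two]; exact_mod_cast CharP.cast_eq_zero F 2
    calc (1 : MonoidAlgebra F G) + 1
        = algebraMap F (MonoidAlgebra F G) ((1:F) + 1) := by
          rw [map_add, map_one]
      _ = 0 := by rw [this, map_zero]
  have hg : ∀ i, g i * g i = 1 := by
    intro i
    rw [hgdef]
    simp only
    rw [← map_mul, ← ofAdd_add]
    have : v i + v i = 0 := by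
      funext j; revert j; intro j; exact (by decide : ∀ a : ZMod 2, a + a = 0) _
    rw [this, ofAdd_zero, map_one]
  obtain ⟨c, hc0, i0, hi0⟩ := Fintype.not_linearIndependent_iff.mp hv
  have hone : ∀ a : ZMod 2, a ≠ 0 → a = 1 := by decide
  set S : Finset (Fin k) := Finset.univ.filter (fun i => c i = 1) with hS
  have hsum : ∑ i ∈ S, v i = 0 := by
    rw [← hc0, Finset.sum_filter]
    apply Finset.sum_congr rfl
    intro i _
    by_cases h : c i = 1
    · simp [h]
    · have : c i = 0 := by
        by_contra h'; exact h (hone _ h')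
      simp [h, this]
  have haS : i0 ∈ S := by
    rw [hS, Finset.mem_filter]
    exact ⟨Finset.mem_univ _, hone _ hi0⟩
  set T := S.erase i0 with hT
  have hprodT : ∏ i ∈ T, g i = g i0 := by
    have h1 : ∏ i ∈ T, g i = MonoidAlgebra.of F G (Multiplicative.ofAdd (∑ i ∈ T, v i)) := by
      rw [ofAdd_sum, map_prod]
    have h2' : ∑ i ∈ T, v i = v i0 := by
      have := Finset.add_sum_erase S v haS
      rw [hsum] at this
      have h3 : v i0 + (v i0 + ∑ i ∈ T, v i) = v i0 + 0 := by rw [this]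
      rwa [← add_assoc, (by funext j; exact (by decide : ∀ a : ZMod 2, a + a = 0) _ : v i0 + v i0 = 0), zero_add, add_zero] at h3
    rw [h1, h2']
  have hSzero : ∏ i ∈ S, (1 + g i) = 0 := by
    rw [← Finset.mul_prod_erase S _ haS, ← hT, ← hprodT, mul_comm]
    exact aux_prod h2 g hg T
  have hsub : S ⊆ Finset.univ := Finset.subset_univ S
  calc ∏ i : Fin k, (1 + g i)
      = (∏ i ∈ Finset.univ \ S, (1 + g i)) * ∏ i ∈ S, (1 + g i) :=
        (Finset.prod_sdiff hsub).symm
    _ = 0 := by rw [hSzero, mul_zero]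
end

section
/- Let m be a natural number, ε > 0 and L > 0 real numbers, set s = ε·L/m (with m ≥ 1), and let a, b : Fin m → ℝ be two families of nonnegative reals with L ≤ ∑_{i} b i. If ∑_{i} ⌊a i / s⌋ ≤ ∑_{i} ⌊b i / s⌋, then ∑_{i} a i ≤ (1 + ε) · ∑_{i} b i. -/
/-- Final `(1+ε)`-approximation guarantee: with scaling unit `s = ε·L/m`, if
`L ≤ ∑ b` and `∑ ⌊a i/s⌋ ≤ ∑ ⌊b i/s⌋`, then `∑ a ≤ (1+ε)·∑ b`. -/
theorem stmt_16 (m : ℕ) (hm : 1 ≤ m) (ε L : ℝ) (hε : 0 < ε) (hL : 0 < L)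
    (a b : Fin m → ℝ) (ha : ∀ i, 0 ≤ a i) (hb : ∀ i, 0 ≤ b i)
    (hLb : L ≤ ∑ i, b i)
    (h : (∑ i, ⌊a i / (ε * L / m)⌋) ≤ ∑ i, ⌊b i / (ε * L / m)⌋) :
    ∑ i, a i ≤ (1 + ε) * ∑ i, b i := by
  set s : ℝ := ε * L / m with hs
  have hm0 : (0 : ℝ) < m := by exact_mod_cast hm
  have hspos : 0 < s := by positivity
  -- ∑ a ≤ s * ∑ ⌊a/s⌋ + s * m
  have h1 : ∑ i, a i ≤ s * (∑ i, ⌊a i / s⌋ : ℤ) + s * m := by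
    have : ∑ i, a i ≤ ∑ i : Fin m, (s * (⌊a i / s⌋ : ℝ) + s) := by
      apply Finset.sum_le_sum
      intro i _
      have := Int.lt_floor_add_one (a i / s)
      have h2 : a i / s < (⌊a i / s⌋ : ℝ) + 1 := this
      have := (div_lt_iff₀ hspos).mp h2
      nlinarith
    calc ∑ i, a i ≤ ∑ i : Fin m, (s * (⌊a i / s⌋ : ℝ) + s) := this
      _ = s * (∑ i, ⌊a i / s⌋ : ℤ) + s * m := by
          rw [Finset.sum_add_distrib, ← Finset.mul_sum]
          push_cast
          simp [mul_comm]
  have h2 : s * ((∑ i, ⌊a i / s⌋ : ℤ) : ℝ) ≤ s * ((∑ i, ⌊b i / s⌋ : ℤ) : ℝ) := by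
    apply mul_le_mul_of_nonneg_left _ hspos.le
    exact_mod_cast h
  -- s * ∑ ⌊b/s⌋ ≤ ∑ b
  have h3 : s * ((∑ i, ⌊b i / s⌋ : ℤ) : ℝ) ≤ ∑ i, b i := by
    have : ∑ i : Fin m, (s * (⌊b i / s⌋ : ℝ)) ≤ ∑ i, b i := by
      apply Finset.sum_le_sum
      intro i _
      have hfl : ((⌊b i / s⌋ : ℝ)) ≤ b i / s := Int.floor_le (b i / s)
      have := (le_div_iff₀ hspos).mp hfl
      nlinarith
    calc s * ((∑ i, ⌊b i / s⌋ : ℤ) : ℝ) = ∑ i : Fin m, (s * (⌊b i / s⌋ : ℝ)) := by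
            rw [← Finset.mul_sum]; push_cast; ring
      _ ≤ ∑ i, b i := this
  have hsm : s * m = ε * L := by rw [hs, div_mul_cancel₀ _ hm0.ne']
  have : ∑ i, a i ≤ ∑ i, b i + ε * L := by linarith
  nlinarith [hLb, hε.le]
end
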